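/- arXiv:2308.12165 — 6 statements merged into one kernel-verified Lean document; each statement's English description precedes it below -/
import Mathlib

section
/- If d_X and d_Y are metrics (not merely pseudometrics), then d_{G,A} is a metric on the set of attributed simple graphs up to relabeling: if d_{G,A}(([m],v,e),([n],w,f)) = 0 then m = n and there exists a permutation π ∈ S_n with v_i = w_{π(i)} and e_{ii'} = f_{π(i)π(i')} for all i,i' ∈ [n]. -/
open Finset

section GraphMetricDefs

variable {X Y : Type*}

/-- Two attributed graphs `([m],v,e)` and `([n],w,f)` are equal (i.e. agree up to
relabeling of the vertices). -/
def GraphEqual {m n : ℕ} (v : Fin m → X) (e : Fin m → Fin m → Y)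
    (w : Fin n → X) (f : Fin n → Fin n → Y) : Prop :=
  ∃ h : m = n, ∃ π : Equiv.Perm (Fin n),
    (∀ i : Fin m, v i = w (π (Fin.cast h i))) ∧
    (∀ i i' : Fin m, e i i' = f (π (Fin.cast h i)) (π (Fin.cast h i')))

/-- `e` is a valid edge-attribute map: symmetric with no-edge value `y₀` on the diagonal. -/
def IsGraph {m : ℕ} (y₀ : Y) (e : Fin m → Fin m → Y) : Prop :=
  (∀ i i', e i i' = e i' i) ∧ ∀ i, e i i = y₀

variable [PseudoMetricSpace X] [PseudoMetricSpace Y]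

/-- The expression in brackets (raised to power `1/p`) in the definition of the GTT
distance, for a given subset `I ⊆ [m]` and a permutation `π ∈ S_n`. -/
noncomputable def gttVal (y₀ : Y) (p C : ℝ) {m n : ℕ} (hmn : m ≤ n)
    (v : Fin m → X) (e : Fin m → Fin m → Y)
    (w : Fin n → X) (f : Fin n → Fin n → Y)
    (I : Finset (Fin m)) (π : Equiv.Perm (Fin n)) : ℝ :=
  (((m : ℝ) + (n : ℝ) - 2 * (I.card : ℝ)) * C ^ p
    + ∑ i ∈ I, dist (v i) (w (π (Fin.castLE hmn i))) ^ p
    + (1/2) * ∑ i ∈ I, ∑ i' ∈ I,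
        dist (e i i') (f (π (Fin.castLE hmn i)) (π (Fin.castLE hmn i'))) ^ p
    + (1/2) * ∑ q ∈ ((univ : Finset (Fin m × Fin m)) \ I ×ˢ I),
        dist (e q.1 q.2) y₀ ^ p
    + (1/2) * ∑ q ∈ ((univ : Finset (Fin n × Fin n)) \
        ((I.image fun i => π (Fin.castLE hmn i)) ×ˢ (I.image fun i => π (Fin.castLE hmn i)))),
        dist y₀ (f q.1 q.2) ^ p) ^ (1/p)

/-- The graph transport-transform (GTT) distance of order `p` with vertex penalty `C`
between `([m],v,e)` and `([n],w,f)`, for `m ≤ n`. -/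
noncomputable def dGTT (y₀ : Y) (p C : ℝ) {m n : ℕ} (hmn : m ≤ n)
    (v : Fin m → X) (e : Fin m → Fin m → Y)
    (w : Fin n → X) (f : Fin n → Fin n → Y) : ℝ :=
  Finset.inf' Finset.univ Finset.univ_nonempty
    fun Iπ : Finset (Fin m) × Equiv.Perm (Fin n) => gttVal y₀ p C hmn v e w f Iπ.1 Iπ.2

/-- The GTT distance between two graphs of arbitrary sizes (extended by symmetry). -/
noncomputable def dGTT' (y₀ : Y) (p C : ℝ) {m n : ℕ}
    (v : Fin m → X) (e : Fin m → Fin m → Y)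
    (w : Fin n → X) (f : Fin n → Fin n → Y) : ℝ :=
  if h : m ≤ n then dGTT y₀ p C h v e w f else dGTT y₀ p C (le_of_not_ge h) w f v e

/-- The GOSPA1 distance of order `p` with penalties `C₁` (vertex) and `CY` (edge bound)
between `([m],v,e)` and `([n],w,f)`, for `m ≤ n`. -/
noncomputable def dGOSPA1 (p C₁ CY : ℝ) {m n : ℕ} (hmn : m ≤ n)
    (v : Fin m → X) (e : Fin m → Fin m → Y)
    (w : Fin n → X) (f : Fin n → Fin n → Y) : ℝ :=
  ((n : ℝ) ^ (1/p))⁻¹ *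
    Finset.inf' Finset.univ Finset.univ_nonempty fun π : Equiv.Perm (Fin n) =>
      (((n : ℝ) - (m : ℝ)) * C₁ ^ p
        + ∑ i : Fin m, dist (v i) (w (π (Fin.castLE hmn i))) ^ p
        + (1/2) * ((n : ℝ) - 1)⁻¹ *
            ∑ i : Fin m, ((∑ i' : Fin m,
                dist (e i i') (f (π (Fin.castLE hmn i)) (π (Fin.castLE hmn i'))) ^ p)
              + ((n : ℝ) - (m : ℝ)) * CY ^ p)) ^ (1/p)

/-- The GOSPA1 distance between two graphs of arbitrary sizes (extended by symmetry). -/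
noncomputable def dGOSPA1' (p C₁ CY : ℝ) {m n : ℕ}
    (v : Fin m → X) (e : Fin m → Fin m → Y)
    (w : Fin n → X) (f : Fin n → Fin n → Y) : ℝ :=
  if h : m ≤ n then dGOSPA1 p C₁ CY h v e w f
  else dGOSPA1 p C₁ CY (le_of_not_ge h) w f v e

/-- The GOSPA2 distance of order `p` with penalty `C₂`
between `([m],v,e)` and `([n],w,f)`, for `m ≤ n`. -/
noncomputable def dGOSPA2 (y₀ : Y) (p C₂ : ℝ) {m n : ℕ} (hmn : m ≤ n)
    (v : Fin m → X) (e : Fin m → Fin m → Y)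
    (w : Fin n → X) (f : Fin n → Fin n → Y) : ℝ :=
  ((n : ℝ) ^ (1/p))⁻¹ *
    Finset.inf' Finset.univ Finset.univ_nonempty fun π : Equiv.Perm (Fin n) =>
      (((n : ℝ) - (m : ℝ)) * C₂ ^ p
        + ∑ i : Fin m, dist (v i) (w (π (Fin.castLE hmn i))) ^ p
        + (1/2) * ((n : ℝ) - 1)⁻¹ *
            ∑ i : Fin n, ∑ i' : Fin n,
              (if h : (i : ℕ) < m ∧ (i' : ℕ) < m
               then dist (e ⟨i.1, h.1⟩ ⟨i'.1, h.2⟩) (f (π i) (π i')) ^ p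
               else dist y₀ (f (π i) (π i')) ^ p)) ^ (1/p)

/-- The GOSPA2 distance between two graphs of arbitrary sizes (extended by symmetry). -/
noncomputable def dGOSPA2' (y₀ : Y) (p C₂ : ℝ) {m n : ℕ}
    (v : Fin m → X) (e : Fin m → Fin m → Y)
    (w : Fin n → X) (f : Fin n → Fin n → Y) : ℝ :=
  if h : m ≤ n then dGOSPA2 y₀ p C₂ h v e w f
  else dGOSPA2 y₀ p C₂ (le_of_not_ge h) w f v e

end GraphMetricDefs

theorem eq_of_sum_dist_rpow_eq_zero {ι α : Type*} [MetricSpace α] {s : Finset ι}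
    {a b : ι → α} {p : ℝ} (h : ∑ i ∈ s, dist (a i) (b i) ^ p = 0) {i : ι} (hi : i ∈ s) :
    a i = b i := by
  have hi' := (sum_eq_zero_iff_of_nonneg fun j _ => Real.rpow_nonneg dist_nonneg p).1 h i hi
  exact dist_eq_zero.1 ((Real.rpow_eq_zero_iff_of_nonneg dist_nonneg).1 hi').1

section GTT

variable {X Y : Type*} [PseudoMetricSpace X] [PseudoMetricSpace Y] (y₀ : Y) {p C : ℝ}
  {m n : ℕ} (hmn : m ≤ n) (v : Fin m → X) (e : Fin m → Fin m → Y)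
  (w : Fin n → X) (f : Fin n → Fin n → Y)

theorem exists_gttVal_eq_dGTT :
    ∃ (I : Finset (Fin m)) (π : Equiv.Perm (Fin n)),
      gttVal y₀ p C hmn v e w f I π = dGTT y₀ p C hmn v e w f := by
  obtain ⟨⟨I, π⟩, -, h⟩ := exists_mem_eq_inf' univ_nonempty
    fun Iπ : Finset (Fin m) × Equiv.Perm (Fin n) => gttVal y₀ p C hmn v e w f Iπ.1 Iπ.2
  exact ⟨I, π, h.symm⟩

/-- The five terms of `gttVal` are nonnegative, so each vanishes; the vertex penalty
`(m + n - 2|I|) C^p` vanishes only when `|I| = m = n`. -/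
theorem card_eq_and_sums_eq_zero_of_gttVal_eq_zero {I : Finset (Fin m)} {π : Equiv.Perm (Fin n)}
    (hC : 0 < C)
    (h : gttVal y₀ p C hmn v e w f I π = 0) :
    m = n ∧ I = univ ∧
      ∑ i ∈ I, dist (v i) (w (π (Fin.castLE hmn i))) ^ p = 0 ∧
      ∑ q ∈ I ×ˢ I, dist (e q.1 q.2) (f (π (Fin.castLE hmn q.1)) (π (Fin.castLE hmn q.2))) ^ p
        = 0 := by
  have hcard : (#I : ℝ) ≤ m := by exact_mod_cast I.card_le_univ.trans_eq (Fintype.card_fin m)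
  have hmn' : (m : ℝ) ≤ n := by exact_mod_cast hmn
  have hCp : 0 < C ^ p := Real.rpow_pos_of_pos hC p
  have h₁ : 0 ≤ ((m : ℝ) + n - 2 * #I) * C ^ p := mul_nonneg (by linarith) hCp.le
  rw [gttVal, ← sum_product' I I, Real.rpow_eq_zero_iff_of_nonneg (by positivity)] at h
  have h₂ : 0 ≤ ∑ i ∈ I, dist (v i) (w (π (Fin.castLE hmn i))) ^ p := by positivity
  have h₃ : 0 ≤ ∑ q ∈ I ×ˢ I,
      dist (e q.1 q.2) (f (π (Fin.castLE hmn q.1)) (π (Fin.castLE hmn q.2))) ^ p := by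
    positivity
  have h₄ : 0 ≤ ∑ q ∈ ((univ : Finset (Fin m × Fin m)) \ I ×ˢ I), dist (e q.1 q.2) y₀ ^ p := by
    positivity
  have h₅ : 0 ≤ ∑ q ∈ ((univ : Finset (Fin n × Fin n)) \
      ((I.image fun i => π (Fin.castLE hmn i)) ×ˢ (I.image fun i => π (Fin.castLE hmn i)))),
      dist y₀ (f q.1 q.2) ^ p := by
    positivity
  have hpenalty : ((m : ℝ) + n - 2 * #I) * C ^ p = 0 := by linarith [h.1]
  have hI : (#I : ℝ) = m ∧ (m : ℝ) = n := by
    have := (mul_eq_zero.1 hpenalty).resolve_right hCp.ne'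
    constructor <;> linarith
  exact ⟨by exact_mod_cast hI.2, I.eq_univ_of_card (by simpa using hI.1),
    by linarith [h.1], by linarith [h.1]⟩

end GTT

theorem dGTT_eq_zero_implies_graphEqual_general
    {X Y : Type*} [MetricSpace X] [MetricSpace Y]
    (y₀ : Y) (p C : ℝ) (hC : 0 < C)
    {m n : ℕ} (hmn : m ≤ n)
    (v : Fin m → X) (e : Fin m → Fin m → Y)
    (w : Fin n → X) (f : Fin n → Fin n → Y)
    (h0 : dGTT y₀ p C hmn v e w f = 0) :
    ∃ h : m = n, ∃ π : Equiv.Perm (Fin n),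
      (∀ i : Fin m, v i = w (π (Fin.cast h i))) ∧
      (∀ i i' : Fin m, e i i' = f (π (Fin.cast h i)) (π (Fin.cast h i'))) := by
  obtain ⟨I, π, hIπ⟩ := exists_gttVal_eq_dGTT (p := p) (C := C) y₀ hmn v e w f
  obtain ⟨rfl, rfl, hvert, hedge⟩ :=
    card_eq_and_sums_eq_zero_of_gttVal_eq_zero y₀ hmn v e w f hC (hIπ.trans h0)
  simp only [Fin.castLE_refl] at hvert hedge
  refine ⟨rfl, π, fun i => ?_, fun i i' => ?_⟩
  · exact eq_of_sum_dist_rpow_eq_zero hvert (mem_univ i)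
  · exact eq_of_sum_dist_rpow_eq_zero (a := fun q => e q.1 q.2)
      (b := fun q => f (π q.1) (π q.2)) hedge (i := (i, i')) (by simp)

/-- Theorem: if `d_X` and `d_Y` are metrics, then the GTT distance
separates graphs up to relabeling: vanishing GTT distance implies the graphs are equal
up to a permutation of the vertex set. -/
theorem dGTT_eq_zero_implies_graphEqual
    {X Y : Type*} [MetricSpace X] [MetricSpace Y]
    (y₀ : Y) (p C : ℝ) (hp : 1 ≤ p) (hC : 0 < C)
    {m n : ℕ} (hmn : m ≤ n)
    (v : Fin m → X) (e : Fin m → Fin m → Y)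
    (w : Fin n → X) (f : Fin n → Fin n → Y)
    (he : IsGraph y₀ e) (hf : IsGraph y₀ f)
    (h0 : dGTT y₀ p C hmn v e w f = 0) :
    ∃ h : m = n, ∃ π : Equiv.Perm (Fin n),
      (∀ i : Fin m, v i = w (π (Fin.cast h i))) ∧
      (∀ i i' : Fin m, e i i' = f (π (Fin.cast h i)) (π (Fin.cast h i'))) :=
  dGTT_eq_zero_implies_graphEqual_general y₀ p C hC hmn v e w f h0
end

section
/- Dividing the GTT distance by the maximal number of vertices does not in general yield a metric: let p = 1, C > 0, and suppose X contains points x₁, x₂ with d_X(x₁,x₂) ≥ 2C. Let G₁ = ([1],v,e) with v₁ = x₁, G₂ = ([1],w,f) with w₁ = x₂, and G₃ = ([2],u,g) with u₁ = x₁, u₂ = x₂, where e, f, g are identically y₀. Then (1/max{1,1})·d_{G,A}(G₁,G₂) = 2C > C = (1/max{1,2})·d_{G,A}(G₁,G₃) + (1/max{2,1})·d_{G,A}(G₃,G₂); in particular the normalized map violates the triangle inequality. -/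
open Finset

/-!
With `p = 1` and no edges, matching a one-vertex graph `{x}` against an `n`-vertex graph costs
either `(n + 1) C` (nothing matched) or `(n - 1) C + d(x, w_j)` (`x` matched to `w_j`).
Hence `G₁` and `G₂` are at distance `2C`, whereas `G₃` contains each of them and is at
distance `C` from both; normalising by `max{1,2} = 2` halves these two distances.
-/

section GTTComputations

variable {X Y : Type*} [PseudoMetricSpace X] [PseudoMetricSpace Y]

lemma dGTT'_of_le (y₀ : Y) (p C : ℝ) {m n : ℕ} (h : m ≤ n)
    (v : Fin m → X) (e : Fin m → Fin m → Y) (w : Fin n → X) (f : Fin n → Fin n → Y) :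
    dGTT' y₀ p C v e w f = dGTT y₀ p C h v e w f :=
  dif_pos h

lemma dGTT'_of_lt (y₀ : Y) (p C : ℝ) {m n : ℕ} (h : n < m)
    (v : Fin m → X) (e : Fin m → Fin m → Y) (w : Fin n → X) (f : Fin n → Fin n → Y) :
    dGTT' y₀ p C v e w f = dGTT y₀ p C h.le w f v e :=
  dif_neg h.not_ge

lemma gttVal_edgeless (y₀ : Y) {p : ℝ} (hp : p ≠ 0) (C : ℝ) {m n : ℕ} (hmn : m ≤ n)
    (v : Fin m → X) (w : Fin n → X) (I : Finset (Fin m)) (π : Equiv.Perm (Fin n)) :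
    gttVal y₀ p C hmn v (fun _ _ => y₀) w (fun _ _ => y₀) I π =
      (((m : ℝ) + n - 2 * #I) * C ^ p + ∑ i ∈ I, dist (v i) (w (π (Fin.castLE hmn i))) ^ p)
        ^ (1 / p) := by
  simp [gttVal, Real.zero_rpow hp]

lemma dGTT_singleton_edgeless (y₀ : Y) (C : ℝ) {n : ℕ} (h : 1 ≤ n + 1)
    (x : X) (w : Fin (n + 1) → X) :
    dGTT y₀ 1 C h (fun _ : Fin 1 => x) (fun _ _ => y₀) w (fun _ _ => y₀) =
      min ((n + 2) * C) (n * C + univ.inf' univ_nonempty fun j => dist x (w j)) := by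
  have h_empty : ∀ π, gttVal y₀ 1 C h (fun _ : Fin 1 => x) (fun _ _ => y₀) w (fun _ _ => y₀)
      ∅ π = (n + 2) * C := by
    intro π
    simp only [gttVal_edgeless y₀ one_ne_zero, card_empty, sum_empty, div_one, Real.rpow_one]
    push_cast
    ring
  have h_single : ∀ π, gttVal y₀ 1 C h (fun _ : Fin 1 => x) (fun _ _ => y₀) w (fun _ _ => y₀)
      {0} π = n * C + dist x (w (π (Fin.castLE h 0))) := by
    intro π
    simp only [gttVal_edgeless y₀ one_ne_zero, card_singleton, sum_singleton, div_one,
      Real.rpow_one]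
    push_cast
    ring
  have hsubsets : ∀ I : Finset (Fin 1), I = ∅ ∨ I = {0} := by decide
  apply le_antisymm
  · obtain ⟨j, -, hj⟩ := exists_mem_eq_inf' univ_nonempty fun j => dist x (w j)
    refine le_min (inf'_le_of_le _ (mem_univ (∅, 1)) (h_empty 1).le) ?_
    refine inf'_le_of_le _ (mem_univ ({0}, Equiv.swap (Fin.castLE h 0) j)) ?_
    rw [h_single, Equiv.swap_apply_left, hj]
  · refine le_inf' _ _ fun ⟨I, π⟩ _ => ?_
    rcases hsubsets I with rfl | rfl
    · exact min_le_of_left_le (h_empty π).ge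
    · refine min_le_of_right_le ?_
      rw [h_single]
      gcongr
      exact inf'_le _ (mem_univ _)

lemma inf'_dist_eq_zero {ι : Type*} {s : Finset ι} (hs : s.Nonempty) (x : X) (w : ι → X)
    {j : ι} (hj : j ∈ s) (hwj : w j = x) :
    s.inf' hs (fun j => dist x (w j)) = 0 :=
  le_antisymm (inf'_le_of_le _ hj (by simp [hwj])) (le_inf' _ _ fun _ _ => dist_nonneg)

end GTTComputations

/-- Remark: normalizing the GTT distance by the maximal number of
vertices violates the triangle inequality. With `p = 1`, points `x₁, x₂` at distance
`≥ 2C`, the one-point graphs `G₁ = ({x₁}, no edges)`, `G₂ = ({x₂}, no edges)` and the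
two-point graph `G₃ = ({x₁,x₂}, no edges)` satisfy
`(1/max{1,1})·d(G₁,G₂) = 2C > C = (1/max{1,2})·d(G₁,G₃) + (1/max{2,1})·d(G₃,G₂)`. -/
theorem normalized_dGTT_not_a_metric
    {X Y : Type*} [PseudoMetricSpace X] [PseudoMetricSpace Y]
    (y₀ : Y) (C : ℝ) (hC : 0 < C)
    (x₁ x₂ : X) (hx : 2 * C ≤ dist x₁ x₂) :
    (1 / (max 1 1 : ℝ)) *
        dGTT' y₀ 1 C (fun _ : Fin 1 => x₁) (fun _ _ => y₀)
          (fun _ : Fin 1 => x₂) (fun _ _ => y₀) = 2 * C ∧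
    (1 / (max 1 2 : ℝ)) *
        dGTT' y₀ 1 C (fun _ : Fin 1 => x₁) (fun _ _ => y₀)
          (![x₁, x₂]) (fun _ _ => y₀)
      + (1 / (max 2 1 : ℝ)) *
        dGTT' y₀ 1 C (![x₁, x₂]) (fun _ _ => y₀)
          (fun _ : Fin 1 => x₂) (fun _ _ => y₀) = C ∧
    C < 2 * C := by
  have d₁₂ : dGTT' y₀ 1 C (fun _ : Fin 1 => x₁) (fun _ _ => y₀)
      (fun _ : Fin 1 => x₂) (fun _ _ => y₀) = 2 * C := by
    rw [dGTT'_of_le y₀ 1 C le_rfl, dGTT_singleton_edgeless (n := 0), inf'_const]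
    norm_num [hx]
  have d₁₃ : dGTT' y₀ 1 C (fun _ : Fin 1 => x₁) (fun _ _ => y₀)
      (![x₁, x₂]) (fun _ _ => y₀) = C := by
    rw [dGTT'_of_le y₀ 1 C (by norm_num), dGTT_singleton_edgeless (n := 1),
      inf'_dist_eq_zero _ x₁ ![x₁, x₂] (mem_univ 0) rfl]
    norm_num
    linarith
  have d₃₂ : dGTT' y₀ 1 C (![x₁, x₂]) (fun _ _ => y₀)
      (fun _ : Fin 1 => x₂) (fun _ _ => y₀) = C := by
    rw [dGTT'_of_lt y₀ 1 C (by norm_num), dGTT_singleton_edgeless (n := 1),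
      inf'_dist_eq_zero _ x₂ ![x₁, x₂] (mem_univ 1) rfl]
    norm_num
    linarith
  refine ⟨?_, ?_, by linarith⟩
  · rw [d₁₂]; norm_num
  · rw [d₁₃, d₃₂]; norm_num; ring
end

section
/- Let ([m],v,e) and ([n],w,f) be attributed simple graphs with m ≤ n and n ≥ 1. Adjoin an auxiliary point x_* to X with d_X(x,x_*)^p = C₂^p for all x ∈ X (and d_X(x_*,x_*) = 0). Enlarge ([m],v,e) to size n by setting v_i = x_* for m+1 ≤ i ≤ n and e_{ii'} = y₀ whenever max{i,i'} ≥ m+1. Then d_{G,R₂}(([m],v,e),([n],w,f)) = n^{−1/p}·min over π ∈ S_n of [Σ_{i∈[n]} d_X(v_i,w_{π(i)})^p + ½·(n−1)^{−1}·Σ_{(i,i')∈[n]²} d_Y(e_{ii'},f_{π(i)π(i')})^p]^{1/p} = d_{G,R₂}(([n],v,e),([n],w,f)). -/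
open Finset

/-!
Each of the `n - m` auxiliary vertices `x⋆` lies at distance exactly `C₂` from every vertex
attribute, so matching it contributes the unmatched-vertex penalty `C₂ ^ p`, and a padded edge
carries `y₀`, so its cost is the GOSPA2 cost of an edge absent from the smaller graph. Hence
every permutation has the same cost before and after padding, and the minima agree.
-/

section FillUp

variable {α β : Type*} {m : ℕ}

def fillUp (n : ℕ) (a : α) (v : Fin m → α) : Fin n → α :=
  fun i => if h : (i : ℕ) < m then v ⟨i, h⟩ else a

def fillUp₂ (n : ℕ) (b : β) (e : Fin m → Fin m → β) : Fin n → Fin n → β :=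
  fun i i' => if h : (i : ℕ) < m ∧ (i' : ℕ) < m then e ⟨i, h.1⟩ ⟨i', h.2⟩ else b

theorem Fin.sum_dite_lt {M : Type*} [AddCommMonoid M] {n : ℕ} (hmn : m ≤ n)
    (A : Fin m → M) (c : M) :
    ∑ i : Fin n, (if h : (i : ℕ) < m then A ⟨i, h⟩ else c) = (n - m) • c + ∑ i, A i := by
  obtain ⟨k, rfl⟩ := Nat.exists_eq_add_of_le hmn
  rw [← Fin.sum_congr' _ (rfl : m + k = m + k), Fin.sum_univ_add, add_comm]
  simp

end FillUp

section GOSPA2Cost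

variable {X Y : Type*} [PseudoMetricSpace X] [PseudoMetricSpace Y]

noncomputable def gospa2Cost (y₀ : Y) (p C₂ : ℝ) {m n : ℕ} (hmn : m ≤ n)
    (v : Fin m → X) (e : Fin m → Fin m → Y)
    (w : Fin n → X) (f : Fin n → Fin n → Y) (π : Equiv.Perm (Fin n)) : ℝ :=
  ((n : ℝ) - (m : ℝ)) * C₂ ^ p
    + ∑ i : Fin m, dist (v i) (w (π (Fin.castLE hmn i))) ^ p
    + (1/2) * ((n : ℝ) - 1)⁻¹ *
        ∑ i : Fin n, ∑ i' : Fin n,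
          (if h : (i : ℕ) < m ∧ (i' : ℕ) < m
           then dist (e ⟨i.1, h.1⟩ ⟨i'.1, h.2⟩) (f (π i) (π i')) ^ p
           else dist y₀ (f (π i) (π i')) ^ p)

theorem dGOSPA2_eq_inf'_gospa2Cost (y₀ : Y) (p C₂ : ℝ) {m n : ℕ} (hmn : m ≤ n)
    (v : Fin m → X) (e : Fin m → Fin m → Y) (w : Fin n → X) (f : Fin n → Fin n → Y) :
    dGOSPA2 y₀ p C₂ hmn v e w f = ((n : ℝ) ^ (1/p))⁻¹ *
      univ.inf' univ_nonempty fun π => gospa2Cost y₀ p C₂ hmn v e w f π ^ (1/p) :=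
  rfl

theorem gospa2Cost_self (y₀ : Y) (p C₂ : ℝ) {n : ℕ}
    (v : Fin n → X) (e : Fin n → Fin n → Y) (w : Fin n → X) (f : Fin n → Fin n → Y)
    (π : Equiv.Perm (Fin n)) :
    gospa2Cost y₀ p C₂ le_rfl v e w f π =
      ∑ i, dist (v i) (w (π i)) ^ p
        + (1/2) * ((n : ℝ) - 1)⁻¹ * ∑ i, ∑ i', dist (e i i') (f (π i) (π i')) ^ p := by
  simp [gospa2Cost]

theorem sum_dist_fillUp_pow {X' : Type*} [PseudoMetricSpace X'] (p C₂ : ℝ) {m n : ℕ}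
    (hmn : m ≤ n) (ι : X → X') (hι : ∀ x x', dist (ι x) (ι x') = dist x x')
    (xstar : X') (hxstar : ∀ x, dist (ι x) xstar ^ p = C₂ ^ p)
    (v : Fin m → X) (u : Fin n → X) :
    ∑ i, dist (fillUp n xstar (ι ∘ v) i) (ι (u i)) ^ p =
      ((n : ℝ) - m) * C₂ ^ p + ∑ i : Fin m, dist (v i) (u (Fin.castLE hmn i)) ^ p := by
  have hterm : ∀ i : Fin n, dist (fillUp n xstar (ι ∘ v) i) (ι (u i)) ^ p =
      if h : (i : ℕ) < m then dist (v ⟨i, h⟩) (u (Fin.castLE hmn ⟨i, h⟩)) ^ p else C₂ ^ p := by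
    intro i
    unfold fillUp
    split_ifs
    · exact congrArg (· ^ p) (hι _ _)
    · rw [dist_comm, hxstar]
  rw [Finset.sum_congr rfl fun i _ => hterm i,
    Fin.sum_dite_lt hmn (fun j => dist (v j) (u (Fin.castLE hmn j)) ^ p), nsmul_eq_mul,
    Nat.cast_sub hmn]

theorem gospa2Cost_fillUp {X' : Type*} [PseudoMetricSpace X'] (y₀ : Y) (p C₂ : ℝ) {m n : ℕ}
    (hmn : m ≤ n) (ι : X → X') (hι : ∀ x x', dist (ι x) (ι x') = dist x x')
    (xstar : X') (hxstar : ∀ x, dist (ι x) xstar ^ p = C₂ ^ p)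
    (v : Fin m → X) (e : Fin m → Fin m → Y) (w : Fin n → X) (f : Fin n → Fin n → Y)
    (π : Equiv.Perm (Fin n)) :
    gospa2Cost y₀ p C₂ hmn v e w f π =
      gospa2Cost y₀ p C₂ le_rfl (fillUp n xstar (ι ∘ v)) (fillUp₂ n y₀ e) (ι ∘ w) f π := by
  have hedge : ∀ i i' : Fin n, dist (fillUp₂ n y₀ e i i') (f (π i) (π i')) ^ p =
      if h : (i : ℕ) < m ∧ (i' : ℕ) < m
      then dist (e ⟨i.1, h.1⟩ ⟨i'.1, h.2⟩) (f (π i) (π i')) ^ p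
      else dist y₀ (f (π i) (π i')) ^ p :=
    fun i i' => apply_dite (fun b => dist b (f (π i) (π i')) ^ p) _ _ _
  rw [gospa2Cost_self]
  simp only [Function.comp_apply]
  rw [sum_dist_fillUp_pow p C₂ hmn ι hι xstar hxstar v fun i => w (π i)]
  simp only [hedge, gospa2Cost]

end GOSPA2Cost

theorem dGOSPA2_eq_fillup_general
    {X X' Y : Type*} [PseudoMetricSpace X] [PseudoMetricSpace X'] [PseudoMetricSpace Y]
    (y₀ : Y) (p C₂ : ℝ)
    {m n : ℕ} (hmn : m ≤ n)
    (v : Fin m → X) (e : Fin m → Fin m → Y)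
    (w : Fin n → X) (f : Fin n → Fin n → Y)
    (ιX : X → X') (hιX : ∀ x x', dist (ιX x) (ιX x') = dist x x')
    (xstar : X')
    (hxstar : ∀ x, dist (ιX x) xstar ^ p = C₂ ^ p)
    (v' : Fin n → X')
    (hv' : ∀ i : Fin n, v' i = if h : (i : ℕ) < m then ιX (v ⟨i.1, h⟩) else xstar)
    (e' : Fin n → Fin n → Y)
    (he' : ∀ i i' : Fin n, e' i i' =
      if h : (i : ℕ) < m ∧ (i' : ℕ) < m then e ⟨i.1, h.1⟩ ⟨i'.1, h.2⟩ else y₀)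
    (w' : Fin n → X') (hw' : ∀ j : Fin n, w' j = ιX (w j)) :
    dGOSPA2 y₀ p C₂ hmn v e w f =
      ((n : ℝ) ^ (1/p))⁻¹ *
        Finset.inf' Finset.univ Finset.univ_nonempty
          (fun π : Equiv.Perm (Fin n) =>
            ((∑ i : Fin n, dist (v' i) (w' (π i)) ^ p)
              + (1/2) * ((n : ℝ) - 1)⁻¹ *
                  ∑ i : Fin n, ∑ i' : Fin n,
                    dist (e' i i') (f (π i) (π i')) ^ p) ^ (1/p)) ∧
    dGOSPA2 y₀ p C₂ hmn v e w f = dGOSPA2 y₀ p C₂ (le_refl n) v' e' w' f := by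
  obtain rfl : v' = fillUp n xstar (ιX ∘ v) := funext hv'
  obtain rfl : e' = fillUp₂ n y₀ e := funext₂ he'
  obtain rfl : w' = ιX ∘ w := funext hw'
  have hfill : dGOSPA2 y₀ p C₂ hmn v e w f =
      dGOSPA2 y₀ p C₂ le_rfl (fillUp n xstar (ιX ∘ v)) (fillUp₂ n y₀ e) (ιX ∘ w) f := by
    simp only [dGOSPA2_eq_inf'_gospa2Cost, gospa2Cost_fillUp y₀ p C₂ hmn ιX hιX xstar hxstar]
  refine ⟨?_, hfill⟩
  simp only [hfill, dGOSPA2_eq_inf'_gospa2Cost, gospa2Cost_self]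

/-- Proposition: GOSPA2 via filling up the smaller graph. Adjoin an
auxiliary vertex `x⋆` (in an extension `X'` of `X`) with `d(x,x⋆)^p = C₂^p`; fill up
`([m],v,e)` to size `n` with isolated auxiliary vertices (all new edge attributes `y₀`).
Then the GOSPA2 distance equals the optimal matching expression for the two size-`n`
graphs, which in turn is the GOSPA2 distance of the filled-up graphs. -/
theorem dGOSPA2_eq_fillup
    {X X' Y : Type*} [PseudoMetricSpace X] [PseudoMetricSpace X'] [PseudoMetricSpace Y]
    (y₀ : Y) (p C₂ CX CY : ℝ) (hp : 1 ≤ p)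
    (hCX0 : 0 ≤ CX) (hCY0 : 0 ≤ CY)
    (hdX : ∀ x x' : X, dist x x' ≤ CX) (hdY : ∀ y y' : Y, dist y y' ≤ CY)
    (hC₂ : CX ^ p + CY ^ p ≤ C₂ ^ p)
    (hY3 : 1 < p → ∀ y₁ y₂ : Y, dist y₁ y₂ ≤ max (dist y₁ y₀) (dist y₀ y₂))
    {m n : ℕ} (hmn : m ≤ n) (hn : 1 ≤ n)
    (v : Fin m → X) (e : Fin m → Fin m → Y)
    (w : Fin n → X) (f : Fin n → Fin n → Y)
    (he : IsGraph y₀ e) (hf : IsGraph y₀ f)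
    (ιX : X → X') (hιX : ∀ x x', dist (ιX x) (ιX x') = dist x x')
    (xstar : X')
    (hxstar : ∀ x, dist (ιX x) xstar ^ p = C₂ ^ p)
    (v' : Fin n → X')
    (hv' : ∀ i : Fin n, v' i = if h : (i : ℕ) < m then ιX (v ⟨i.1, h⟩) else xstar)
    (e' : Fin n → Fin n → Y)
    (he' : ∀ i i' : Fin n, e' i i' =
      if h : (i : ℕ) < m ∧ (i' : ℕ) < m then e ⟨i.1, h.1⟩ ⟨i'.1, h.2⟩ else y₀)
    (w' : Fin n → X') (hw' : ∀ j : Fin n, w' j = ιX (w j)) :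
    dGOSPA2 y₀ p C₂ hmn v e w f =
      ((n : ℝ) ^ (1/p))⁻¹ *
        Finset.inf' Finset.univ Finset.univ_nonempty
          (fun π : Equiv.Perm (Fin n) =>
            ((∑ i : Fin n, dist (v' i) (w' (π i)) ^ p)
              + (1/2) * ((n : ℝ) - 1)⁻¹ *
                  ∑ i : Fin n, ∑ i' : Fin n,
                    dist (e' i i') (f (π i) (π i')) ^ p) ^ (1/p)) ∧
    dGOSPA2 y₀ p C₂ hmn v e w f = dGOSPA2 y₀ p C₂ (le_refl n) v' e' w' f :=
  dGOSPA2_eq_fillup_general y₀ p C₂ hmn v e w f ιX hιX xstar hxstar v' hv' e' he' w' hw'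
end

section
/- If d_X and d_Y are metrics (not merely pseudometrics), then both GOSPA distances separate graphs up to relabeling: for i ∈ {1,2}, if d_{G,R_i}(([m],v,e),([n],w,f)) = 0 then m = n and there exists a permutation π ∈ S_n with v_i = w_{π(i)} and e_{ii'} = f_{π(i)π(i')} for all i,i' ∈ [n]. -/
/-! All terms inside a GOSPA bracket are nonnegative, so if the distance vanishes (and `n > 0`)
some permutation `π` makes each of them vanish. The size term `(n - m) * C ^ p` with `C > 0`
forces `m = n`, and since `dist x y ^ p = 0` only for `x = y` in a metric space, `π` matches the
vertex and edge attributes. For `n = 1` the edge term carries the factor `(n - 1)⁻¹ = 0` and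
says nothing, but then the only edge is the diagonal one, where both graphs carry `y₀`. -/

open Finset

section GOSPASeparation

variable {X Y : Type*}

theorem exists_eq_zero_of_inv_rpow_mul_inf'_rpow_add_add_eq_zero {ι : Type*} [Fintype ι]
    [Nonempty ι] {N p : ℝ} (hN : 0 < N) (hp : p ≠ 0) {a b c : ι → ℝ}
    (ha : ∀ i, 0 ≤ a i) (hb : ∀ i, 0 ≤ b i) (hc : ∀ i, 0 ≤ c i)
    (h : (N ^ (1 / p))⁻¹ * univ.inf' univ_nonempty (fun i => (a i + b i + c i) ^ (1 / p)) = 0) :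
    ∃ i, a i = 0 ∧ b i = 0 ∧ c i = 0 := by
  obtain ⟨i, -, hi⟩ := exists_mem_eq_inf' univ_nonempty fun i => (a i + b i + c i) ^ (1 / p)
  have hsum : (a i + b i + c i) ^ (1 / p) = 0 := by
    rw [← hi]
    exact (mul_eq_zero.mp h).resolve_left (by positivity)
  have hab := add_nonneg (ha i) (hb i)
  obtain ⟨hab0, hc0⟩ := (add_eq_zero_iff_of_nonneg hab (hc i)).mp <|
    (Real.rpow_eq_zero (add_nonneg hab (hc i)) (one_div_ne_zero hp)).mp hsum
  obtain ⟨ha0, hb0⟩ := (add_eq_zero_iff_of_nonneg (ha i) (hb i)).mp hab0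
  exact ⟨i, ha0, hb0, hc0⟩

theorem sum_dist_rpow_eq_zero_iff {ι : Type*} [Fintype ι] [MetricSpace X] {p : ℝ} (hp : p ≠ 0)
    {a b : ι → X} : ∑ i, dist (a i) (b i) ^ p = 0 ↔ ∀ i, a i = b i := by
  simp [Finset.sum_eq_zero_iff_of_nonneg, Real.rpow_nonneg, Real.rpow_eq_zero, hp]

theorem sum_sum_dist_rpow_eq_zero_iff {ι κ : Type*} [Fintype ι] [Fintype κ] [MetricSpace X]
    {p : ℝ} (hp : p ≠ 0) {a b : ι → κ → X} :
    ∑ i, ∑ j, dist (a i j) (b i j) ^ p = 0 ↔ ∀ i j, a i j = b i j := by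
  rw [← Fintype.sum_prod_type']
  exact (sum_dist_rpow_eq_zero_iff hp).trans Prod.forall

theorem eq_of_natCast_sub_mul_rpow_eq_zero {m n : ℕ} {C p : ℝ} (hC : 0 < C)
    (h : ((n : ℝ) - m) * C ^ p = 0) : m = n := by
  have hnm : (n : ℝ) - m = 0 :=
    (mul_eq_zero.mp h).resolve_right (Real.rpow_pos_of_pos hC p).ne'
  exact_mod_cast (sub_eq_zero.mp hnm).symm

theorem eq_zero_of_half_mul_inv_sub_one_mul_eq_zero {N S : ℝ} (hN : 1 < N)
    (h : 1 / 2 * (N - 1)⁻¹ * S = 0) : S = 0 := by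
  have hN1 : 0 < N - 1 := sub_pos.mpr hN
  exact (mul_eq_zero.mp h).resolve_left (by positivity)

theorem graphEqual_of_size_eq_zero (v : Fin 0 → X) (e : Fin 0 → Fin 0 → Y) (w : Fin 0 → X)
    (f : Fin 0 → Fin 0 → Y) : GraphEqual v e w f :=
  ⟨rfl, 1, finZeroElim, finZeroElim⟩

theorem graphEqual_of_perm {y₀ : Y} {n : ℕ} {v w : Fin n → X} {e f : Fin n → Fin n → Y}
    (he : IsGraph y₀ e) (hf : IsGraph y₀ f) (π : Equiv.Perm (Fin n)) (hv : ∀ i, v i = w (π i))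
    (hef : 2 ≤ n → ∀ i i', e i i' = f (π i) (π i')) : GraphEqual v e w f := by
  refine ⟨rfl, π, hv, fun i i' => ?_⟩
  by_cases hn : 2 ≤ n
  · exact hef hn i i'
  · obtain rfl : i = i' := Fin.ext (by omega)
    exact (he.2 i).trans (hf.2 (π i)).symm

variable [MetricSpace X] [MetricSpace Y] {y₀ : Y} {p : ℝ} {m n : ℕ}
  {v : Fin m → X} {e : Fin m → Fin m → Y} {w : Fin n → X} {f : Fin n → Fin n → Y}

theorem graphEqual_of_dGOSPA1_eq_zero (hmn : m ≤ n) {C₁ CY : ℝ} (hp : p ≠ 0) (hC₁ : 0 < C₁)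
    (hCY : 0 ≤ CY) (he : IsGraph y₀ e) (hf : IsGraph y₀ f)
    (h : dGOSPA1 p C₁ CY hmn v e w f = 0) :
    GraphEqual v e w f := by
  rcases Nat.eq_zero_or_pos n with rfl | hn
  · obtain rfl := Nat.le_zero.mp hmn
    exact graphEqual_of_size_eq_zero v e w f
  have hnm : (0 : ℝ) ≤ n - m := sub_nonneg.mpr (by exact_mod_cast hmn)
  have hn1 : (0 : ℝ) ≤ n - 1 := sub_nonneg.mpr (by exact_mod_cast hn)
  obtain ⟨π, hsize, hvert, hedge⟩ := exists_eq_zero_of_inv_rpow_mul_inf'_rpow_add_add_eq_zero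
    (by exact_mod_cast hn) hp (fun _ => by positivity) (fun _ => by positivity)
    (fun _ => by positivity) h
  obtain rfl := eq_of_natCast_sub_mul_rpow_eq_zero hC₁ hsize
  refine graphEqual_of_perm he hf π ((sum_dist_rpow_eq_zero_iff hp).mp hvert) fun hn2 => ?_
  simp only [sub_self, zero_mul, add_zero] at hedge
  exact (sum_sum_dist_rpow_eq_zero_iff hp).mp
    (eq_zero_of_half_mul_inv_sub_one_mul_eq_zero (by exact_mod_cast hn2) hedge)

theorem graphEqual_of_dGOSPA2_eq_zero (hmn : m ≤ n) {C₂ : ℝ} (hp : p ≠ 0) (hC₂ : 0 < C₂)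
    (he : IsGraph y₀ e) (hf : IsGraph y₀ f) (h : dGOSPA2 y₀ p C₂ hmn v e w f = 0) :
    GraphEqual v e w f := by
  rcases Nat.eq_zero_or_pos n with rfl | hn
  · obtain rfl := Nat.le_zero.mp hmn
    exact graphEqual_of_size_eq_zero v e w f
  have hnm : (0 : ℝ) ≤ n - m := sub_nonneg.mpr (by exact_mod_cast hmn)
  have hn1 : (0 : ℝ) ≤ n - 1 := sub_nonneg.mpr (by exact_mod_cast hn)
  obtain ⟨π, hsize, hvert, hedge⟩ := exists_eq_zero_of_inv_rpow_mul_inf'_rpow_add_add_eq_zero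
    (by exact_mod_cast hn) hp (fun _ => by positivity) (fun _ => by positivity)
    (fun _ => mul_nonneg (by positivity) <| sum_nonneg fun _ _ => sum_nonneg fun _ _ => by
      split_ifs <;> positivity) h
  obtain rfl := eq_of_natCast_sub_mul_rpow_eq_zero hC₂ hsize
  refine graphEqual_of_perm he hf π ((sum_dist_rpow_eq_zero_iff hp).mp hvert) fun hn2 => ?_
  simp only [Fin.is_lt, and_self, dite_true, Fin.eta] at hedge
  exact (sum_sum_dist_rpow_eq_zero_iff hp).mp
    (eq_zero_of_half_mul_inv_sub_one_mul_eq_zero (by exact_mod_cast hn2) hedge)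

end GOSPASeparation

theorem dGOSPA_eq_zero_implies_graphEqual_general
    {X Y : Type*} [MetricSpace X] [MetricSpace Y]
    (y₀ : Y) (p C₁ C₂ CY : ℝ) (hp : 1 ≤ p)
    (hCY0 : 0 ≤ CY)
    (hC₁0 : 0 < C₁)
    (hC₂0 : 0 < C₂)
    {m n : ℕ} (hmn : m ≤ n)
    (v : Fin m → X) (e : Fin m → Fin m → Y)
    (w : Fin n → X) (f : Fin n → Fin n → Y)
    (he : IsGraph y₀ e) (hf : IsGraph y₀ f) :
    (dGOSPA1 p C₁ CY hmn v e w f = 0 →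
      ∃ h : m = n, ∃ π : Equiv.Perm (Fin n),
        (∀ i : Fin m, v i = w (π (Fin.cast h i))) ∧
        (∀ i i' : Fin m, e i i' = f (π (Fin.cast h i)) (π (Fin.cast h i')))) ∧
    (dGOSPA2 y₀ p C₂ hmn v e w f = 0 →
      ∃ h : m = n, ∃ π : Equiv.Perm (Fin n),
        (∀ i : Fin m, v i = w (π (Fin.cast h i))) ∧
        (∀ i i' : Fin m, e i i' = f (π (Fin.cast h i)) (π (Fin.cast h i')))) := by
  have hp0 : p ≠ 0 := (zero_lt_one.trans_le hp).ne'
  exact ⟨graphEqual_of_dGOSPA1_eq_zero hmn hp0 hC₁0 hCY0 he hf,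
    graphEqual_of_dGOSPA2_eq_zero hmn hp0 hC₂0 he hf⟩

/-- Theorem: if `d_X` and `d_Y` are metrics, then both GOSPA distances
separate graphs up to relabeling: vanishing GOSPA1 or GOSPA2 distance implies the graphs
are equal up to a permutation of the vertex set. -/
theorem dGOSPA_eq_zero_implies_graphEqual
    {X Y : Type*} [MetricSpace X] [MetricSpace Y]
    (y₀ : Y) (p C₁ C₂ CX CY : ℝ) (hp : 1 ≤ p)
    (hCX0 : 0 ≤ CX) (hCY0 : 0 ≤ CY)
    (hdX : ∀ x x' : X, dist x x' ≤ CX) (hdY : ∀ y y' : Y, dist y y' ≤ CY)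
    (hC₁ : CX ^ p + (1/2) * CY ^ p ≤ C₁ ^ p) (hC₁0 : 0 < C₁)
    (hC₂ : CX ^ p + CY ^ p ≤ C₂ ^ p) (hC₂0 : 0 < C₂)
    (hY3 : 1 < p → ∀ y₁ y₂ : Y, dist y₁ y₂ ≤ max (dist y₁ y₀) (dist y₀ y₂))
    {m n : ℕ} (hmn : m ≤ n)
    (v : Fin m → X) (e : Fin m → Fin m → Y)
    (w : Fin n → X) (f : Fin n → Fin n → Y)
    (he : IsGraph y₀ e) (hf : IsGraph y₀ f) :
    (dGOSPA1 p C₁ CY hmn v e w f = 0 →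
      ∃ h : m = n, ∃ π : Equiv.Perm (Fin n),
        (∀ i : Fin m, v i = w (π (Fin.cast h i))) ∧
        (∀ i i' : Fin m, e i i' = f (π (Fin.cast h i)) (π (Fin.cast h i')))) ∧
    (dGOSPA2 y₀ p C₂ hmn v e w f = 0 →
      ∃ h : m = n, ∃ π : Equiv.Perm (Fin n),
        (∀ i : Fin m, v i = w (π (Fin.cast h i))) ∧
        (∀ i i' : Fin m, e i i' = f (π (Fin.cast h i)) (π (Fin.cast h i')))) :=
  dGOSPA_eq_zero_implies_graphEqual_general y₀ p C₁ C₂ CY hp hCY0 hC₁0 hC₂0 hmn v e w f he hf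
end

section
/- The lower bound C₂^p ≥ C_X^p + C_Y^p in the definition of GOSPA2 cannot be relaxed to C₂ = C_X + ½·C_Y: let p = 1, C₂ = C_X + ½·C_Y with C_Y > 0, and suppose there exist x₁, x₂, x₃ ∈ X with d_X(x₃,x₁) = d_X(x₃,x₂) = C_X and y₁ ∈ Y with d_Y(y₀,y₁) = C_Y. Define G₁ = ([1],v,e) with v₁ = x₃ and e ≡ y₀; G₂ = ([2],w,f) with w_i = x_i for i ∈ [2], f₁₂ = f₂₁ = y₁ and f_{ij} = y₀ otherwise; G₃ = ([3],u,g) with u_i = x_i for i ∈ [3], g₁₂ = g₂₁ = y₁ and g_{ij} = y₀ otherwise. Then d_{G,R₂}(G₁,G₂) = C₂ + C_Y/4 > C₂ + C_Y/6 = d_{G,R₂}(G₁,G₃) + d_{G,R₂}(G₃,G₂), so the triangle inequality fails. -/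
open Finset

/-! For `p = 1`, GOSPA2 is `1/n` times the least cost of a vertex assignment. Every assignment of
the lone vertex `x₃` of `G₁` into `G₂` pays `C₂` for the unmatched vertex, `C_X` for the vertex
distance and `C_Y` for the unmatched edge (counted twice, weight `½`), so `d(G₁,G₂) = C₂ + C_Y/4`.
Through `G₃`, which contains `x₃` itself and `G₂` padded by an isolated vertex, the least costs are
`2C₂ + C_Y/2` and `C₂` over `n = 3`: the detour avoids paying `C_X`, and the penalty
`C₂ = C_X + C_Y/2` is too small to make up for it. -/

namespace GOSPA2

variable {X Y : Type*} [PseudoMetricSpace X] [PseudoMetricSpace Y]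

noncomputable def edgeCost (y₀ : Y) (p : ℝ) {m n : ℕ} (e : Fin m → Fin m → Y)
    (f : Fin n → Fin n → Y) (π : Equiv.Perm (Fin n)) : ℝ :=
  ∑ i : Fin n, ∑ i' : Fin n,
    (if h : (i : ℕ) < m ∧ (i' : ℕ) < m
     then dist (e ⟨i.1, h.1⟩ ⟨i'.1, h.2⟩) (f (π i) (π i')) ^ p
     else dist y₀ (f (π i) (π i')) ^ p)

noncomputable def cost (y₀ : Y) (p C₂ : ℝ) {m n : ℕ} (hmn : m ≤ n)
    (v : Fin m → X) (e : Fin m → Fin m → Y)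
    (w : Fin n → X) (f : Fin n → Fin n → Y) (π : Equiv.Perm (Fin n)) : ℝ :=
  ((n : ℝ) - (m : ℝ)) * C₂ ^ p
    + ∑ i : Fin m, dist (v i) (w (π (Fin.castLE hmn i))) ^ p
    + (1/2) * ((n : ℝ) - 1)⁻¹ * edgeCost y₀ p e f π

section

variable {y₀ : Y} {p C₂ : ℝ} {m n : ℕ} {hmn : m ≤ n}
  {v : Fin m → X} {e : Fin m → Fin m → Y} {w : Fin n → X} {f : Fin n → Fin n → Y}

theorem dGOSPA2_eq_inf'_cost : dGOSPA2 y₀ p C₂ hmn v e w f =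
    ((n : ℝ) ^ (1/p))⁻¹ * univ.inf' univ_nonempty
      fun π => cost y₀ p C₂ hmn v e w f π ^ (1/p) :=
  rfl

theorem dGOSPA2_one_eq_of_isLeast {c : ℝ}
    (hc : IsLeast (Set.range (cost y₀ 1 C₂ hmn v e w f)) c) :
    dGOSPA2 y₀ 1 C₂ hmn v e w f = c / n := by
  obtain ⟨⟨π₀, hπ₀⟩, hle⟩ := hc
  have hinf : univ.inf' univ_nonempty (cost y₀ 1 C₂ hmn v e w f) = c :=
    le_antisymm (hπ₀ ▸ inf'_le _ (mem_univ π₀))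
      (le_inf' _ _ fun π _ => hle ⟨π, rfl⟩)
  simp only [dGOSPA2_eq_inf'_cost, div_one, Real.rpow_one, hinf]
  rw [div_eq_inv_mul]

theorem edgeCost_nonneg (π : Equiv.Perm (Fin n)) : 0 ≤ edgeCost y₀ p e f π :=
  sum_nonneg fun _ _ => sum_nonneg fun _ _ => by split <;> positivity

theorem sub_mul_le_cost (hn : 1 ≤ n) (π : Equiv.Perm (Fin n)) :
    ((n : ℝ) - m) * C₂ ^ p ≤ cost y₀ p C₂ hmn v e w f π := by
  have hvertex : 0 ≤ ∑ i : Fin m, dist (v i) (w (π (Fin.castLE hmn i))) ^ p :=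
    sum_nonneg fun _ _ => by positivity
  have hedge : 0 ≤ (1/2) * ((n : ℝ) - 1)⁻¹ * edgeCost y₀ p e f π :=
    mul_nonneg (mul_nonneg one_half_pos.le (inv_nonneg.2 (sub_nonneg.2 (by exact_mod_cast hn))))
      (edgeCost_nonneg π)
  rw [cost]
  linarith

theorem edgeCost_of_edgeless (π : Equiv.Perm (Fin n)) :
    edgeCost y₀ p (fun _ _ : Fin m => y₀) f π = ∑ i : Fin n, ∑ i' : Fin n, dist y₀ (f i i') ^ p := by
  simp only [edgeCost, dite_eq_ite, ite_self]
  rw [← Equiv.sum_comp π (fun i => ∑ i' : Fin n, dist y₀ (f i i') ^ p)]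
  exact sum_congr rfl fun i _ => Equiv.sum_comp π (fun i' => dist y₀ (f (π i) i') ^ p)

theorem cost_identity_of_padding (hp : p ≠ 0) (hv : ∀ i, v i = w (Fin.castLE hmn i))
    (he : ∀ i i', e i i' = f (Fin.castLE hmn i) (Fin.castLE hmn i'))
    (hf : ∀ i i' : Fin n, ¬((i : ℕ) < m ∧ (i' : ℕ) < m) → f i i' = y₀) :
    cost y₀ p C₂ hmn v e w f 1 = ((n : ℝ) - m) * C₂ ^ p := by
  have hvertex : ∑ i : Fin m, dist (v i) (w (Fin.castLE hmn i)) ^ p = 0 :=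
    sum_eq_zero fun i _ => by rw [hv, dist_self, Real.zero_rpow hp]
  have hedge : edgeCost y₀ p e f 1 = 0 := by
    refine sum_eq_zero fun i _ => sum_eq_zero fun i' _ => ?_
    rw [Equiv.Perm.one_apply, Equiv.Perm.one_apply]
    split
    · rw [he]; simp [Real.zero_rpow hp]
    · rw [hf i i' ‹_›]; simp [Real.zero_rpow hp]
  simp [cost, hvertex, hedge]

theorem dGOSPA2_one_of_padding (hn : 1 ≤ n) (hv : ∀ i, v i = w (Fin.castLE hmn i))
    (he : ∀ i i', e i i' = f (Fin.castLE hmn i) (Fin.castLE hmn i'))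
    (hf : ∀ i i' : Fin n, ¬((i : ℕ) < m ∧ (i' : ℕ) < m) → f i i' = y₀) :
    dGOSPA2 y₀ 1 C₂ hmn v e w f = ((n : ℝ) - m) * C₂ / n := by
  refine dGOSPA2_one_eq_of_isLeast ⟨⟨1, ?_⟩, ?_⟩
  · simpa using cost_identity_of_padding (C₂ := C₂) one_ne_zero hv he hf
  · rintro _ ⟨π, rfl⟩
    simpa using sub_mul_le_cost (p := 1) hn π

end

theorem dGOSPA2_vertex_to_pair (y₀ y₁ : Y) (C₂ : ℝ) (x₁ x₂ x₃ : X)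
    (hx : dist x₃ x₁ = dist x₃ x₂) :
    dGOSPA2 y₀ 1 C₂ (by norm_num : (1:ℕ) ≤ 2)
        (fun _ : Fin 1 => x₃) (fun _ _ => y₀)
        (![x₁, x₂]) (fun i j => if i = j then y₀ else y₁)
      = (C₂ + dist x₃ x₁ + dist y₀ y₁) / 2 := by
  have hcost : ∀ π, cost y₀ 1 C₂ (by norm_num : (1:ℕ) ≤ 2) (fun _ : Fin 1 => x₃) (fun _ _ => y₀)
      (![x₁, x₂]) (fun i j => if i = j then y₀ else y₁) π = C₂ + dist x₃ x₁ + dist y₀ y₁ := by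
    intro π
    have hvertex : ∀ j : Fin 2, dist x₃ (![x₁, x₂] j) = dist x₃ x₁ := by
      intro j; fin_cases j <;> simp [hx]
    simp only [cost, edgeCost_of_edgeless, Real.rpow_one, Fin.sum_univ_one, Fin.sum_univ_two,
      hvertex]
    norm_num
    ring
  refine dGOSPA2_one_eq_of_isLeast ⟨⟨1, hcost 1⟩, ?_⟩
  rintro _ ⟨π, rfl⟩
  exact (hcost π).ge

theorem dGOSPA2_vertex_to_triple (y₀ y₁ : Y) (C₂ : ℝ) (x₁ x₂ x₃ : X) :
    dGOSPA2 y₀ 1 C₂ (by norm_num : (1:ℕ) ≤ 3)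
        (fun _ : Fin 1 => x₃) (fun _ _ => y₀)
        (![x₁, x₂, x₃])
        (fun i j => if (i = 0 ∧ j = 1) ∨ (i = 1 ∧ j = 0) then y₁ else y₀)
      = (2 * C₂ + dist y₀ y₁ / 2) / 3 := by
  have hcost : ∀ π, cost y₀ 1 C₂ (by norm_num : (1:ℕ) ≤ 3) (fun _ : Fin 1 => x₃) (fun _ _ => y₀)
      (![x₁, x₂, x₃]) (fun i j => if (i = 0 ∧ j = 1) ∨ (i = 1 ∧ j = 0) then y₁ else y₀) π
      = 2 * C₂ + dist y₀ y₁ / 2 + dist x₃ (![x₁, x₂, x₃] (π 0)) := by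
    intro π
    simp only [cost, edgeCost_of_edgeless, Real.rpow_one, Fin.sum_univ_one, Fin.sum_univ_three]
    norm_num [Fin.ext_iff]
    ring
  refine dGOSPA2_one_eq_of_isLeast ⟨⟨Equiv.swap 0 2, ?_⟩, ?_⟩
  · simp [hcost]
  · rintro _ ⟨π, rfl⟩
    rw [hcost]
    exact le_add_of_nonneg_right dist_nonneg

theorem dGOSPA2_pair_to_triple (y₀ y₁ : Y) (C₂ : ℝ) (x₁ x₂ x₃ : X) :
    dGOSPA2 y₀ 1 C₂ (by norm_num : (2:ℕ) ≤ 3)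
        (![x₁, x₂]) (fun i j => if i = j then y₀ else y₁)
        (![x₁, x₂, x₃])
        (fun i j => if (i = 0 ∧ j = 1) ∨ (i = 1 ∧ j = 0) then y₁ else y₀)
      = C₂ / 3 := by
  rw [dGOSPA2_one_of_padding (by norm_num)]
  · norm_num
  · intro i; fin_cases i <;> rfl
  · intro i i'; fin_cases i <;> fin_cases i' <;> simp
  · intro i i' h; fin_cases i <;> fin_cases i' <;> simp_all

end GOSPA2

open GOSPA2 in
/-- Remark: the bound `C₂^p ≥ C_X^p + C_Y^p` in GOSPA2 cannot be
relaxed to `C₂ = C_X + ½·C_Y`: for `p = 1` there exist three graphs violating the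
triangle inequality. -/
theorem dGOSPA2_relaxed_penalty_not_a_metric
    {X Y : Type*} [PseudoMetricSpace X] [PseudoMetricSpace Y]
    (y₀ : Y) (C₂ CX CY : ℝ)
    (hCY0 : 0 < CY)
    (hC₂ : C₂ = CX + (1/2) * CY)
    (x₁ x₂ x₃ : X) (y₁ : Y)
    (h31 : dist x₃ x₁ = CX) (h32 : dist x₃ x₂ = CX)
    (h01 : dist y₀ y₁ = CY) :
    dGOSPA2 y₀ 1 C₂ (by norm_num : (1:ℕ) ≤ 2)
        (fun _ : Fin 1 => x₃) (fun _ _ => y₀)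
        (![x₁, x₂]) (fun i j => if i = j then y₀ else y₁)
      = C₂ + CY / 4 ∧
    dGOSPA2 y₀ 1 C₂ (by norm_num : (1:ℕ) ≤ 3)
        (fun _ : Fin 1 => x₃) (fun _ _ => y₀)
        (![x₁, x₂, x₃])
        (fun i j => if (i = 0 ∧ j = 1) ∨ (i = 1 ∧ j = 0) then y₁ else y₀)
      + dGOSPA2 y₀ 1 C₂ (by norm_num : (2:ℕ) ≤ 3)
        (![x₁, x₂]) (fun i j => if i = j then y₀ else y₁)
        (![x₁, x₂, x₃])
        (fun i j => if (i = 0 ∧ j = 1) ∨ (i = 1 ∧ j = 0) then y₁ else y₀)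
      = C₂ + CY / 6 ∧
    C₂ + CY / 6 < C₂ + CY / 4 := by
  refine ⟨?_, ?_, by linarith⟩
  · rw [dGOSPA2_vertex_to_pair y₀ y₁ C₂ x₁ x₂ x₃ (h31.trans h32.symm), h31, h01, hC₂]
    ring
  · rw [dGOSPA2_vertex_to_triple, dGOSPA2_pair_to_triple, h01, hC₂]
    ring
end

section
/- If the penalties satisfy C₁^p ≤ C₂^p − ½·C_Y^p (in addition to their defining lower bounds), then for any attributed simple graphs ([m],v,e) and ([n],w,f): d_{G,R₁}(([m],v,e),([n],w,f)) ≤ d_{G,R₂}(([m],v,e),([n],w,f)). -/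
/-!
For a fixed matching `π` both brackets share the vertex term, and the GOSPA2 edge sum contains
the GOSPA1 edge sum over matched pairs as a sub-sum. What is left is the GOSPA1 surcharge
`(n - m)·C_Y^p / (2(n - 1))` per matched vertex: as `m ≤ n - 1` whenever `n ≠ m`, the `m` matched
vertices pay at most `½(n - m)·C_Y^p` in total, and `C₁^p + ½·C_Y^p ≤ C₂^p` absorbs this into the
difference of the penalties for the `n - m` unmatched vertices.
-/

open Finset

theorem Fintype.sum_comp_le_sum_of_injective {ι κ M : Type*} [Fintype ι] [Fintype κ]
    [AddCommMonoid M] [PartialOrder M] [IsOrderedAddMonoid M]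
    {φ : ι → κ} (hφ : Function.Injective φ) {g : κ → M} (hg : ∀ k, 0 ≤ g k) :
    ∑ i, g (φ i) ≤ ∑ k, g k :=
  (Finset.sum_map univ ⟨φ, hφ⟩ g).symm.trans_le (Finset.sum_le_univ_sum_of_nonneg hg)

theorem natCast_mul_inv_sub_one_mul_sub_le {m n : ℕ} (hmn : m ≤ n) :
    (m : ℝ) * ((n : ℝ) - 1)⁻¹ * ((n : ℝ) - m) ≤ (n : ℝ) - m := by
  rcases hmn.eq_or_lt with rfl | hlt
  · simp
  have hm : (m : ℝ) ≤ n - 1 := by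
    rw [le_sub_iff_add_le]
    exact_mod_cast hlt
  exact mul_le_of_le_one_left (by linarith) (mul_inv_le_one_of_le₀ hm (m.cast_nonneg.trans hm))

section GOSPA

variable {X Y : Type*} [PseudoMetricSpace X] [PseudoMetricSpace Y]

theorem sum_dist_castLE_le_sum_dite (y₀ : Y) (p : ℝ) {m n : ℕ} (hmn : m ≤ n)
    (e : Fin m → Fin m → Y) (g : Fin n → Fin n → Y) :
    ∑ i : Fin m, ∑ i' : Fin m, dist (e i i') (g (Fin.castLE hmn i) (Fin.castLE hmn i')) ^ p
      ≤ ∑ i : Fin n, ∑ i' : Fin n,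
          (if h : (i : ℕ) < m ∧ (i' : ℕ) < m
           then dist (e ⟨i.1, h.1⟩ ⟨i'.1, h.2⟩) (g i i') ^ p
           else dist y₀ (g i i') ^ p) := by
  simp only [← Fintype.sum_prod_type']
  have hinj : Function.Injective (Prod.map (Fin.castLE hmn) (Fin.castLE hmn)) :=
    (Fin.castLE_injective hmn).prodMap (Fin.castLE_injective hmn)
  refine le_of_eq_of_le ?_ (Fintype.sum_comp_le_sum_of_injective hinj fun q => ?_)
  · refine Fintype.sum_congr _ _ fun q => ?_
    simp
  · split <;> exact Real.rpow_nonneg dist_nonneg p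

theorem dGOSPA1_le_dGOSPA2_of_le (y₀ : Y) {p C₁ C₂ CY : ℝ} (hp : 0 ≤ p) (hCY : 0 ≤ CY)
    (hC₁ : 0 ≤ C₁ ^ p) (hC₁₂ : C₁ ^ p ≤ C₂ ^ p - (1/2) * CY ^ p)
    {m n : ℕ} (hmn : m ≤ n) (v : Fin m → X) (e : Fin m → Fin m → Y)
    (w : Fin n → X) (f : Fin n → Fin n → Y) :
    dGOSPA1 p C₁ CY hmn v e w f ≤ dGOSPA2 y₀ p C₂ hmn v e w f := by
  rcases Nat.eq_zero_or_pos n with rfl | hn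
  · obtain rfl := Nat.le_zero.mp hmn
    simp [dGOSPA1, dGOSPA2]
  refine mul_le_mul_of_nonneg_left (Finset.le_inf' _ _ fun π _ =>
    (Finset.inf'_le _ (mem_univ π)).trans ?_) (by positivity)
  set c := ((n : ℝ) - 1)⁻¹
  set A := ∑ i : Fin m, dist (v i) (w (π (Fin.castLE hmn i))) ^ p
  set B := ∑ i : Fin m, ∑ i' : Fin m,
    dist (e i i') (f (π (Fin.castLE hmn i)) (π (Fin.castLE hmn i'))) ^ p
  set D := ∑ i : Fin n, ∑ i' : Fin n,
    (if h : (i : ℕ) < m ∧ (i' : ℕ) < m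
     then dist (e ⟨i.1, h.1⟩ ⟨i'.1, h.2⟩) (f (π i) (π i')) ^ p
     else dist y₀ (f (π i) (π i')) ^ p)
  have hc : 0 ≤ c := inv_nonneg.2 (sub_nonneg.2 (by exact_mod_cast hn))
  have hnm : (0 : ℝ) ≤ n - m := sub_nonneg.2 (by exact_mod_cast hmn)
  have hBD : B ≤ D := sum_dist_castLE_le_sum_dite y₀ p hmn e fun j j' => f (π j) (π j')
  have hCYp : 0 ≤ CY ^ p := Real.rpow_nonneg hCY p
  have hcoef := natCast_mul_inv_sub_one_mul_sub_le hmn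
  have hsum : ∑ i : Fin m, ((∑ i' : Fin m,
        dist (e i i') (f (π (Fin.castLE hmn i)) (π (Fin.castLE hmn i'))) ^ p)
      + ((n : ℝ) - m) * CY ^ p) = B + m * ((n - m) * CY ^ p) := by
    simp [sum_add_distrib, B]
  rw [hsum]
  refine Real.rpow_le_rpow (by positivity) ?_ (by positivity)
  calc ((n : ℝ) - m) * C₁ ^ p + A + 1 / 2 * c * (B + m * ((n - m) * CY ^ p))
      ≤ (n - m) * (C₁ ^ p + 1 / 2 * CY ^ p) + A + 1 / 2 * c * D := by
        have := mul_le_mul_of_nonneg_right hcoef hCYp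
        have := mul_le_mul_of_nonneg_left hBD hc
        linarith
    _ ≤ (n - m) * C₂ ^ p + A + 1 / 2 * c * D := by
        gcongr
        linarith

end GOSPA

theorem dGOSPA1_le_dGOSPA2_general
    {X Y : Type*} [PseudoMetricSpace X] [PseudoMetricSpace Y]
    (y₀ : Y) (p C₁ C₂ CX CY : ℝ) (hp : 1 ≤ p)
    (hCX0 : 0 ≤ CX) (hCY0 : 0 ≤ CY)
    (hC₁ : CX ^ p + (1/2) * CY ^ p ≤ C₁ ^ p)
    (hC₁₂ : C₁ ^ p ≤ C₂ ^ p - (1/2) * CY ^ p)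
    {m n : ℕ}
    (v : Fin m → X) (e : Fin m → Fin m → Y)
    (w : Fin n → X) (f : Fin n → Fin n → Y) :
    dGOSPA1' p C₁ CY v e w f ≤ dGOSPA2' y₀ p C₂ v e w f := by
  have hC1p : 0 ≤ C₁ ^ p := le_trans (by positivity) hC₁
  unfold dGOSPA1' dGOSPA2'
  split_ifs with h
  · exact dGOSPA1_le_dGOSPA2_of_le y₀ (zero_le_one.trans hp) hCY0 hC1p hC₁₂ h v e w f
  · exact dGOSPA1_le_dGOSPA2_of_le y₀ (zero_le_one.trans hp) hCY0 hC1p hC₁₂ (le_of_not_ge h) w f v e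

/-- Proposition: relation of the GOSPA metrics. If in addition
`C₁^p ≤ C₂^p − ½·C_Y^p`, then `d_{G,R₁} ≤ d_{G,R₂}` for any two attributed simple
graphs. -/
theorem dGOSPA1_le_dGOSPA2
    {X Y : Type*} [PseudoMetricSpace X] [PseudoMetricSpace Y]
    (y₀ : Y) (p C₁ C₂ CX CY : ℝ) (hp : 1 ≤ p)
    (hCX0 : 0 ≤ CX) (hCY0 : 0 ≤ CY)
    (hdX : ∀ x x' : X, dist x x' ≤ CX) (hdY : ∀ y y' : Y, dist y y' ≤ CY)
    (hC₁ : CX ^ p + (1/2) * CY ^ p ≤ C₁ ^ p)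
    (hC₂ : CX ^ p + CY ^ p ≤ C₂ ^ p)
    (hC₁₂ : C₁ ^ p ≤ C₂ ^ p - (1/2) * CY ^ p)
    {m n : ℕ}
    (v : Fin m → X) (e : Fin m → Fin m → Y)
    (w : Fin n → X) (f : Fin n → Fin n → Y)
    (he : IsGraph y₀ e) (hf : IsGraph y₀ f) :
    dGOSPA1' p C₁ CY v e w f ≤ dGOSPA2' y₀ p C₂ v e w f :=
  dGOSPA1_le_dGOSPA2_general y₀ p C₁ C₂ CX CY hp hCX0 hCY0 hC₁ hC₁₂ v e w f
end
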